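/- arXiv:1810.03057 — 5 statements merged into one kernel-verified Lean document; each statement's English description precedes it below -/
import Mathlib

section
/- Let Q_1, …, Q_s be finite groups and let m be a natural number. Let G = F_m * Q_1 * ⋯ * Q_s be the free product of the free group F_m with the groups Q_p, and let φ : G → Q_1 × ⋯ × Q_s be the homomorphism that is trivial on F_m and maps each factor Q_p identically onto the p-th coordinate of the direct product. Then φ is surjective, the kernel of φ is a free group, and the kernel of φ has finite index in G equal to |Q_1|⋯|Q_s|. -/
/-!
Reidemeister–Schreier, made explicit. Write `P = ∏ Q i` and let
`t p = ι₀(p₀) ι₁(p₁) ⋯ ι₍ₛ₋₁₎(pₛ₋₁)` be the ordered-product transversal of `φ`. The kernel is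
generated by the Schreier elements `(t (φ g * p))⁻¹ * g * t p` of the generators `g` of `G`.
Those coming from a factor `Q j` are products of the elements
`(t p)⁻¹ * ιⱼ(pⱼ) * t (update p j 1)`, which are trivial when `p` is trivial below `j`; the
remaining ones, together with one conjugate of each free letter per coset, form `KerBasis`.
To see that they are free, map `G` into `(P → F) ⋊ P`, with `F` free on `KerBasis`, so that
the `F`-component at `1` is a homomorphism on the kernel sending every basis element to its
own letter.
-/

open Monoid Function

theorem List.prod_ofFn_eq_mul_prod_update {M : Type*} [Monoid M] {s : ℕ} (f : Fin s → M)
    (j : Fin s) (hf : ∀ i < j, f i = 1) :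
    (List.ofFn f).prod = f j * (List.ofFn (update f j 1)).prod := by
  induction s with
  | zero => exact j.elim0
  | succ s ih =>
    rw [List.ofFn_succ, List.ofFn_succ, List.prod_cons, List.prod_cons]
    cases j using Fin.cases with
    | zero => simp
    | succ j =>
      rw [hf 0 (Fin.succ_pos j), update_of_ne (Fin.succ_ne_zero j).symm, hf 0 (Fin.succ_pos j),
        one_mul, one_mul]
      change _ = _ * (List.ofFn (update f j.succ 1 ∘ Fin.succ)).prod
      rw [update_comp_eq_of_injective f (Fin.succ_injective _)]
      exact ih _ j fun i hi => hf i.succ (Fin.succ_lt_succ_iff.mpr hi)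

theorem Pi.mulSingle_mul_update {ι : Type*} [DecidableEq ι] {M : ι → Type*}
    [∀ i, MulOneClass (M i)] (p : ∀ i, M i) (j : ι) (a b : M j) :
    Pi.mulSingle j a * update p j b = update p j (a * b) := by
  ext i
  rcases eq_or_ne i j with rfl | hij
  · simp
  · simp [hij]

theorem Pi.mulSingle_inv_mul_self {ι : Type*} [DecidableEq ι] {M : ι → Type*}
    [∀ i, Group (M i)] (p : ∀ i, M i) (j : ι) :
    Pi.mulSingle j (p j)⁻¹ * p = update p j 1 := by
  simpa using Pi.mulSingle_mul_update p j (p j)⁻¹ (p j)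

theorem Pi.mulSingle_self_mul_update_one {ι : Type*} [DecidableEq ι] {M : ι → Type*}
    [∀ i, MulOneClass (M i)] (p : ∀ i, M i) (j : ι) :
    Pi.mulSingle j (p j) * update p j 1 = p := by
  rw [Pi.mulSingle_mul_update, mul_one, update_eq_self]

theorem SemidirectProduct.left_conj_inl_inr {N H : Type*} [Group N] [Group H]
    {ψ : H →* MulAut N} (n : N) (h : H) :
    (MulAut.conj (inl n) (inr h) : N ⋊[ψ] H).left = n * ψ h n⁻¹ := by
  simp

section Schreier

variable {G P : Type*} [Group G] [Group P] (φ : G →* P) (t : P → G)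

def schreierElt (g : G) (p : P) : G := (t (φ g * p))⁻¹ * g * t p

theorem schreierElt_mul (g h : G) (p : P) :
    schreierElt φ t (g * h) p = schreierElt φ t g (φ h * p) * schreierElt φ t h p := by
  simp only [schreierElt, map_mul, mul_assoc, mul_inv_cancel_left]

theorem schreierElt_one (p : P) : schreierElt φ t 1 p = 1 := by
  simp [schreierElt]

theorem schreierElt_inv (g : G) (p : P) :
    schreierElt φ t g⁻¹ p = (schreierElt φ t g (φ g⁻¹ * p))⁻¹ := by
  simp [schreierElt, mul_assoc]

def schreierSubgroup (H : Subgroup G) : Subgroup G where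
  carrier := {g | ∀ p, schreierElt φ t g p ∈ H}
  one_mem' p := by simp [schreierElt_one, H.one_mem]
  mul_mem' hg hh p := by
    rw [schreierElt_mul]
    exact H.mul_mem (hg _) (hh p)
  inv_mem' hg p := by
    rw [schreierElt_inv]
    exact H.inv_mem (hg _)

variable {φ t}

theorem ker_le_of_schreierSubgroup_eq_top (ht : t 1 = 1) {H : Subgroup G}
    (hH : schreierSubgroup φ t H = ⊤) : φ.ker ≤ H := fun k hk => by
  have := (hH ▸ Subgroup.mem_top k : k ∈ schreierSubgroup φ t H) 1
  rwa [schreierElt, hk, mul_one, ht, inv_one, one_mul, mul_one] at this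

theorem map_schreierElt (htφ : ∀ p, φ (t p) = p) (g : G) (p : P) :
    φ (schreierElt φ t g p) = 1 := by
  simp [schreierElt, htφ]

end Schreier

section Cocycle

variable {G P F : Type*} [Group G] [Group P] [Group F]
  (Ψ : G →* (P → F) ⋊[mulAutArrow] P)

theorem left_map_mul_apply (g h : G) (x : P) :
    (Ψ (g * h)).left x = (Ψ g).left x * (Ψ h).left ((Ψ g).right⁻¹ * x) := by
  rw [map_mul, SemidirectProduct.mul_left]
  rfl

theorem left_map_inv_apply (g : G) (x : P) :
    (Ψ g⁻¹).left x = ((Ψ g).left ((Ψ g).right * x))⁻¹ := by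
  have h := left_map_mul_apply Ψ g⁻¹ g x
  have hright : (Ψ g⁻¹).right⁻¹ = (Ψ g).right := by
    rw [map_inv, SemidirectProduct.inv_right, inv_inv]
  rw [inv_mul_cancel, map_one, hright] at h
  exact eq_inv_of_mul_eq_one_left h.symm

variable {φ : G →* P} {Ψ}

def kerCocycle (hΨ : ∀ g, (Ψ g).right = φ g) : φ.ker →* F where
  toFun k := (Ψ k).left 1
  map_one' := by simp
  map_mul' k k' := by
    simp only [Subgroup.coe_mul, left_map_mul_apply, hΨ, MonoidHom.mem_ker.mp k.2, inv_one,
      one_mul]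

theorem left_schreierElt (hΨ : ∀ g, (Ψ g).right = φ g) {t : P → G} (htφ : ∀ p, φ (t p) = p)
    (htΨ : ∀ p, (Ψ (t p)).left p = 1) (g : G) (p : P) :
    (Ψ (schreierElt φ t g p)).left 1 = (Ψ g).left (φ g * p) := by
  rw [schreierElt, left_map_mul_apply, left_map_mul_apply, left_map_inv_apply, hΨ, htφ,
    mul_one, htΨ, inv_one, one_mul, hΨ, map_inv, htφ, inv_inv, mul_one, hΨ, map_mul, map_inv,
    htφ, mul_inv_rev, inv_inv, mul_one, inv_mul_cancel_left, htΨ, mul_one]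

end Cocycle

theorem nonempty_freeGroup_mulEquiv_ker {G P X : Type*} [Group G] [Group P] {φ : G →* P}
    {Ψ : G →* (P → FreeGroup X) ⋊[mulAutArrow] P} (hΨ : ∀ g, (Ψ g).right = φ g)
    (gen : X → G) (hgen : ∀ x, φ (gen x) = 1) (hΨgen : ∀ x, (Ψ (gen x)).left 1 = .of x)
    (hker : φ.ker ≤ (FreeGroup.lift gen).range) : Nonempty (FreeGroup X ≃* φ.ker) := by
  have hcomp : φ.comp (FreeGroup.lift gen) = 1 := FreeGroup.ext_hom _ _ (by simp [hgen])
  let Φ : FreeGroup X →* φ.ker :=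
    (FreeGroup.lift gen).codRestrict φ.ker fun w => DFunLike.congr_fun hcomp w
  have hleft : LeftInverse (kerCocycle hΨ) Φ :=
    DFunLike.congr_fun (FreeGroup.ext_hom ((kerCocycle hΨ).comp Φ) (MonoidHom.id _) fun x => by
      change (Ψ (FreeGroup.lift gen (.of x))).left 1 = .of x
      rw [FreeGroup.lift_apply_of, hΨgen])
  refine ⟨MulEquiv.ofBijective Φ ⟨hleft.injective, ?_⟩⟩
  rintro ⟨k, hk⟩
  obtain ⟨w, rfl⟩ := hker hk
  exact ⟨w, rfl⟩

namespace FreeProdPi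

variable {α : Type*} {s : ℕ} {Q : Fin s → Type*}

def TrivialBelow [∀ i, One (Q i)] (j : Fin s) (p : ∀ i, Q i) : Prop := ∀ i < j, p i = 1

theorem induction_trivialBelow [∀ i, One (Q i)] {C : (∀ i, Q i) → Prop} (one : C 1)
    (step : ∀ j p, TrivialBelow j p → C (update p j 1) → C p) (p : ∀ i, Q i) : C p := by
  suffices h : ∀ k p, (∀ i : Fin s, i + k < s → p i = 1) → C p from
    h s p fun i hi => by omega
  intro k
  induction k with
  | zero =>
    intro p hp
    convert one
    exact funext fun i => hp i i.2
  | succ k ih =>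
    intro p hp
    by_cases hk : k < s
    · obtain ⟨j, hj⟩ : ∃ j : Fin s, (j : ℕ) = s - (k + 1) := ⟨⟨_, by omega⟩, rfl⟩
      refine step j p (fun i hi => hp i (by rw [Fin.lt_def] at hi; omega)) ?_
      refine ih _ fun i hi => ?_
      by_cases hij : i = j
      · rw [hij, update_self]
      · rw [update_of_ne hij]
        exact hp i (by have := Fin.val_ne_of_ne hij; omega)
    · exact ih p fun i hi => by omega

variable [∀ i, Group (Q i)]

variable (α Q) in
def toPi : Coprod (FreeGroup α) (CoprodI Q) →* ∀ i, Q i :=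
  Coprod.lift 1 (CoprodI.lift fun i => MonoidHom.mulSingle Q i)

variable (α) in
def ofFactor (j : Fin s) : Q j →* Coprod (FreeGroup α) (CoprodI Q) :=
  Coprod.inr.comp CoprodI.of

@[simp]
theorem toPi_inl (w : FreeGroup α) : toPi α Q (.inl w) = 1 := by
  simp [toPi]

@[simp]
theorem toPi_ofFactor (j : Fin s) (q : Q j) : toPi α Q (ofFactor α j q) = Pi.mulSingle j q := by
  simp [toPi, ofFactor]

theorem eq_top_of_inl_of_mem_of_ofFactor_mem {S : Subgroup (Coprod (FreeGroup α) (CoprodI Q))}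
    (hinl : ∀ x, .inl (.of x) ∈ S) (hfactor : ∀ j (q : Q j), ofFactor α j q ∈ S) : S = ⊤ := by
  suffices ∀ g, g ∈ S from eq_top_iff.mpr fun g _ => this g
  intro g
  induction g using Coprod.induction_on with
  | inl w =>
    induction w using FreeGroup.induction_on with
    | C1 => simp [S.one_mem]
    | of x => exact hinl x
    | inv_of x hx => simpa using S.inv_mem hx
    | mul x y hx hy => simpa using S.mul_mem hx hy
  | inr w =>
    induction w using CoprodI.induction_on with
    | one => simp [S.one_mem]
    | of j q => exact hfactor j q
    | mul x y hx hy => simpa using S.mul_mem hx hy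
  | mul x y hx hy => exact S.mul_mem hx hy

variable (α) in
def transversal (p : ∀ i, Q i) : Coprod (FreeGroup α) (CoprodI Q) :=
  (List.ofFn fun i => ofFactor α i (p i)).prod

theorem transversal_one : transversal α (1 : ∀ i, Q i) = 1 := by
  simp [transversal]

theorem transversal_eq_mul {j : Fin s} {p : ∀ i, Q i} (hp : TrivialBelow j p) :
    transversal α p = ofFactor α j (p j) * transversal α (update p j 1) := by
  rw [transversal, List.prod_ofFn_eq_mul_prod_update _ j fun i hi => by simp [hp i hi], transversal]
  congr 3
  ext i
  rw [apply_update (fun i => ofFactor α i) p j 1, map_one]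

theorem toPi_transversal (p : ∀ i, Q i) : toPi α Q (transversal α p) = p := by
  induction p using induction_trivialBelow with
  | one => rw [transversal_one, map_one]
  | step j p hp ih =>
    rw [transversal_eq_mul hp, map_mul, ih, toPi_ofFactor, Pi.mulSingle_self_mul_update_one]

variable (α Q) in
abbrev KerBasis : Type _ :=
  (α × ∀ i, Q i) ⊕ Σ j : Fin s, {p : ∀ i, Q i // p j ≠ 1 ∧ ¬TrivialBelow j p}

open scoped Classical in
noncomputable def basisLetter (j : Fin s) (p : ∀ i, Q i) : FreeGroup (KerBasis α Q) :=
  if h : p j ≠ 1 ∧ ¬TrivialBelow j p then .of (.inr ⟨j, p, h⟩) else 1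

theorem basisLetter_of_trivialBelow {j : Fin s} {p : ∀ i, Q i} (hp : TrivialBelow j p) :
    basisLetter (α := α) j p = 1 :=
  dif_neg fun h => h.2 hp

theorem basisLetter_of_eq_one {j : Fin s} {p : ∀ i, Q i} (hp : p j = 1) :
    basisLetter (α := α) j p = 1 :=
  dif_neg fun h => h.1 hp

-- `Q j` acts through `inr` conjugated by `inl (basisLetter j)`: its cocycle is the coboundary
-- of `basisLetter j`, and this is a homomorphism for free.
variable (α Q) in
noncomputable def rewriting : Coprod (FreeGroup α) (CoprodI Q) →*
    ((∀ i, Q i) → FreeGroup (KerBasis α Q)) ⋊[mulAutArrow] (∀ i, Q i) :=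
  Coprod.lift (FreeGroup.lift fun x => ⟨fun p => .of (.inl (x, p)), 1⟩)
    (CoprodI.lift fun j => (MulAut.conj (SemidirectProduct.inl (basisLetter j))).toMonoidHom.comp
      (SemidirectProduct.inr.comp (MonoidHom.mulSingle Q j)))

theorem rewriting_right (g : Coprod (FreeGroup α) (CoprodI Q)) :
    (rewriting α Q g).right = toPi α Q g := by
  suffices SemidirectProduct.rightHom.comp (rewriting α Q) = toPi α Q from
    DFunLike.congr_fun this g
  ext x j q <;> simp [rewriting, toPi]

theorem rewriting_inl_left (x : α) (p : ∀ i, Q i) :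
    (rewriting α Q (.inl (.of x))).left p = .of (.inl (x, p)) := by
  simp [rewriting]

theorem rewriting_ofFactor_left (j : Fin s) (q : Q j) (p : ∀ i, Q i) :
    (rewriting α Q (ofFactor α j q)).left p =
      basisLetter j p * (basisLetter j (Pi.mulSingle j q⁻¹ * p))⁻¹ := by
  have h : rewriting α Q (ofFactor α j q) = MulAut.conj (SemidirectProduct.inl (basisLetter j))
      (SemidirectProduct.inr (Pi.mulSingle j q)) := rfl
  rw [h, SemidirectProduct.left_conj_inl_inr, Pi.mulSingle_inv]
  rfl

theorem rewriting_transversal_left (p : ∀ i, Q i) :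
    (rewriting α Q (transversal α p)).left p = 1 := by
  induction p using induction_trivialBelow with
  | one => rw [transversal_one, map_one]; rfl
  | step j p hp ih =>
    rw [transversal_eq_mul hp, left_map_mul_apply, rewriting_right, toPi_ofFactor,
      rewriting_ofFactor_left, ← Pi.mulSingle_inv, Pi.mulSingle_inv_mul_self, ih,
      basisLetter_of_trivialBelow hp, basisLetter_of_eq_one (update_self ..), inv_one, mul_one,
      mul_one]

variable (α Q) in
def kerGen : KerBasis α Q → Coprod (FreeGroup α) (CoprodI Q)
  | .inl (x, p) => schreierElt (toPi α Q) (transversal α) (.inl (.of x)) p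
  | .inr ⟨j, p, _⟩ => schreierElt (toPi α Q) (transversal α) (ofFactor α j (p j)) (update p j 1)

theorem rewriting_kerGen_left (b : KerBasis α Q) :
    (rewriting α Q (kerGen α Q b)).left 1 = .of b := by
  rw [kerGen.eq_def]
  rcases b with ⟨x, p⟩ | ⟨j, p, hp⟩
  all_goals
    dsimp only
    rw [left_schreierElt rewriting_right toPi_transversal rewriting_transversal_left]
  · rw [toPi_inl, one_mul, rewriting_inl_left]
  · rw [toPi_ofFactor, Pi.mulSingle_mul_update, mul_one, update_eq_self, rewriting_ofFactor_left,
      Pi.mulSingle_inv_mul_self, basisLetter_of_eq_one (update_self ..),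
      inv_one, mul_one, basisLetter, dif_pos hp]

theorem toPi_kerGen (b : KerBasis α Q) : toPi α Q (kerGen α Q b) = 1 := by
  rcases b with ⟨x, p⟩ | ⟨j, p, hp⟩ <;> exact map_schreierElt toPi_transversal _ _

theorem schreierElt_ofFactor_mem_range (j : Fin s) (p : ∀ i, Q i) :
    schreierElt (toPi α Q) (transversal α) (ofFactor α j (p j)) (update p j 1) ∈
      (FreeGroup.lift (kerGen α Q)).range := by
  by_cases hp1 : p j = 1
  · rw [hp1, map_one, schreierElt_one]
    exact one_mem _
  by_cases hp : TrivialBelow j p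
  · rw [schreierElt, toPi_ofFactor, Pi.mulSingle_self_mul_update_one, transversal_eq_mul hp,
      mul_inv_rev, mul_assoc, mul_assoc, inv_mul_cancel_left, inv_mul_cancel]
    exact one_mem _
  · exact ⟨.of (.inr ⟨j, p, hp1, hp⟩), FreeGroup.lift_apply_of⟩

theorem schreierSubgroup_eq_top :
    schreierSubgroup (toPi α Q) (transversal α) (FreeGroup.lift (kerGen α Q)).range = ⊤ := by
  refine eq_top_of_inl_of_mem_of_ofFactor_mem (fun x p => ?_) fun j q p => ?_
  · exact ⟨.of (.inl (x, p)), FreeGroup.lift_apply_of⟩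
  · have hsplit := schreierElt_mul (toPi α Q) (transversal α) (ofFactor α j q)
      (ofFactor α j (p j)) (update p j 1)
    rw [toPi_ofFactor, Pi.mulSingle_self_mul_update_one, ← map_mul] at hsplit
    rw [eq_mul_inv_of_mul_eq hsplit.symm]
    have hq := schreierElt_ofFactor_mem_range (α := α) j (update p j (q * p j))
    rw [update_self, update_idem] at hq
    exact mul_mem hq (inv_mem (schreierElt_ofFactor_mem_range j p))

variable (α Q) in
theorem nonempty_freeGroup_mulEquiv_ker_toPi :
    Nonempty (FreeGroup (KerBasis α Q) ≃* (toPi α Q).ker) :=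
  nonempty_freeGroup_mulEquiv_ker rewriting_right (kerGen α Q) toPi_kerGen rewriting_kerGen_left
    (ker_le_of_schreierSubgroup_eq_top transversal_one schreierSubgroup_eq_top)

end FreeProdPi

/-- Let `Q 0, …, Q (s-1)` be finite groups and `m : ℕ`. Let
`G = FreeGroup (Fin m) ∗ (CoprodI Q)` be the free product of the free group of rank `m`
with the groups `Q p`, and let `φ : G →* ∀ p, Q p` be the homomorphism that is trivial on
the free factor and maps each `Q p` identically onto the `p`-th coordinate of the direct
product. Then `φ` is surjective, its kernel is a free group, and its kernel has finite
index in `G` equal to `|Q 0| ⋯ |Q (s-1)|`. -/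
theorem stmt0 (m s : ℕ) (Q : Fin s → Type) [∀ p, Group (Q p)] [∀ p, Fintype (Q p)]
    (φ : Monoid.Coprod (FreeGroup (Fin m)) (Monoid.CoprodI Q) →* (∀ p, Q p))
    (hφ : φ = Monoid.Coprod.lift 1 (Monoid.CoprodI.lift fun p => MonoidHom.mulSingle Q p)) :
    Function.Surjective φ ∧
      (∃ ι : Type, Nonempty (FreeGroup ι ≃* φ.ker)) ∧
      φ.ker.FiniteIndex ∧
      φ.ker.index = ∏ p, Fintype.card (Q p) := by
  replace hφ : φ = FreeProdPi.toPi (Fin m) Q := hφ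
  subst hφ
  have hsurj : Surjective (FreeProdPi.toPi (Fin m) Q) :=
    fun p => ⟨_, FreeProdPi.toPi_transversal p⟩
  have hindex : (FreeProdPi.toPi (Fin m) Q).ker.index = ∏ p, Fintype.card (Q p) := by
    rw [Subgroup.index_ker, MonoidHom.range_eq_top_of_surjective _ hsurj, Subgroup.card_top,
      Nat.card_pi]
    simp only [Nat.card_eq_fintype_card]
  refine ⟨hsurj, ⟨_, FreeProdPi.nonempty_freeGroup_mulEquiv_ker_toPi (Fin m) Q⟩, ⟨?_⟩, hindex⟩
  rw [hindex]
  exact Finset.prod_ne_zero_iff.mpr fun p _ => Fintype.card_ne_zero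
end

section
/- Let Q_1, …, Q_s be nontrivial finite groups and let m be a natural number, and let G = F_m * Q_1 * ⋯ * Q_s be the free product, with φ : G → Q_1 × ⋯ × Q_s the homomorphism that is trivial on F_m and maps each factor Q_p identically onto the p-th coordinate. If m + s ≥ 2 and it is not the case that m = 0, s = 2 and |Q_1| = |Q_2| = 2, then the kernel of φ admits a surjective group homomorphism onto the free group F_2 of rank 2 (equivalently, it is a free group of rank at least 2). -/
/-!
Write `P = ∏ p, Q p`. Every homomorphism `ρ : G →* F₂ ≀ᵣ P` into the regular wreath product that
lifts `φ` maps `ker φ` into the base group `P → F₂`, on which evaluation at `1` is a homomorphism;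
so it suffices to find such a `ρ` and two elements of `ker φ` whose images take the values `of 0`
and `of 1` at `1`. Free generators may be sent to arbitrary base elements, and each factor `Q p` to
the conjugate of its copy in `P` by a base element. Two free generators, or a free generator `x`
together with `q x q⁻¹`, already suffice. Without free generators we use commutators `⁅q, r⁆` of
elements of different factors: the value of such a commutator at `1` depends on the conjugating
function only at `1`, `q⁻¹`, `r⁻¹` and `(q⁻¹, r⁻¹) ∈ P`, and two commutators with distinct points
`(q⁻¹, r⁻¹)` exist unless `G = ℤ/2 ∗ ℤ/2`.
-/

open Monoid
open scoped commutatorElement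

namespace RegularWreathProduct

variable {D Q : Type*} [Group D] [Group Q]

def base : (Q → D) →* D ≀ᵣ Q where
  toFun f := ⟨f, 1⟩
  map_one' := rfl
  map_mul' f g := by ext <;> simp

@[simp] lemma left_base (f : Q → D) : (base f).left = f := rfl

@[simp] lemma right_base (f : Q → D) : (base f).right = 1 := rfl

def kerEvalOne {G : Type*} [Group G] (ρ : G →* D ≀ᵣ Q) : (rightHom.comp ρ).ker →* D where
  toFun g := (ρ g).left 1
  map_one' := by simp
  map_mul' g h := by
    have hg : (ρ g).right = 1 := g.2
    simp [hg]

lemma left_commutator_conj_base_inl_apply_one (k : Q → D) {u v : Q} (huv : Commute u v) :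
    ⁅base k * inl u * (base k)⁻¹, inl v⁆.left 1 =
      k 1 * (k u⁻¹)⁻¹ * (k (u⁻¹ * v⁻¹) * (k v⁻¹)⁻¹) := by
  have h : v⁻¹ * u⁻¹ = u⁻¹ * v⁻¹ := by rw [← mul_inv_rev, ← mul_inv_rev, huv.eq]
  simp [commutatorElement_def, mul_assoc, h]

end RegularWreathProduct

theorem FreeGroup.surjective_of_forall_of_mem_range {G α : Type*} [Group G]
    (ψ : G →* FreeGroup α) (h : ∀ a, FreeGroup.of a ∈ ψ.range) : Function.Surjective ψ := by
  rw [← MonoidHom.range_eq_top, eq_top_iff, ← FreeGroup.closure_range_of, Subgroup.closure_le]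
  rintro _ ⟨a, rfl⟩
  exact h a

theorem exists_pair_ne_one_of_two_lt_card {G : Type*} [Group G] [Fintype G]
    (h : 2 < Fintype.card G) : ∃ a b : G, a ≠ 1 ∧ b ≠ 1 ∧ a ≠ b := by
  classical
  have : 1 < (Finset.univ.erase (1 : G)).card := by
    rw [Finset.card_erase_of_mem (Finset.mem_univ _), Finset.card_univ]
    omega
  obtain ⟨a, ha, b, hb, hab⟩ := Finset.one_lt_card.mp this
  exact ⟨a, b, Finset.ne_of_mem_erase ha, Finset.ne_of_mem_erase hb, hab⟩

namespace FreeProd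

open RegularWreathProduct

variable {ι κ : Type*} [DecidableEq κ] {Q : κ → Type*} [∀ p, Group (Q p)]

variable (ι Q) in
def toPi : Coprod (FreeGroup ι) (CoprodI Q) →* ∀ p, Q p :=
  Coprod.lift 1 (CoprodI.lift fun p => MonoidHom.mulSingle Q p)

@[simp] lemma toPi_inl (g : FreeGroup ι) : toPi ι Q (Coprod.inl g) = 1 := by
  simp [toPi]

@[simp] lemma toPi_inr_of {p : κ} (q : Q p) :
    toPi ι Q (Coprod.inr (CoprodI.of q)) = Pi.mulSingle p q := by
  simp [toPi]

lemma commutator_mem_ker_toPi {p₀ p₁ : κ} (hp : p₁ ≠ p₀) (q : Q p₀) (r : Q p₁) :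
    ⁅(Coprod.inr (CoprodI.of q) : Coprod (FreeGroup ι) (CoprodI Q)), Coprod.inr (CoprodI.of r)⁆
      ∈ (toPi ι Q).ker := by
  rw [MonoidHom.mem_ker, map_commutatorElement, commutatorElement_eq_one_iff_commute,
    toPi_inr_of, toPi_inr_of]
  exact Pi.mulSingle_commute hp.symm q r

section Wreath

variable {T : Type*} [Group T]

def toWreath (f : ι → (∀ p, Q p) → T) (h : κ → (∀ p, Q p) → T) :
    Coprod (FreeGroup ι) (CoprodI Q) →* T ≀ᵣ (∀ p, Q p) :=
  Coprod.lift (FreeGroup.lift fun i => base (f i))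
    (CoprodI.lift fun p =>
      (MulAut.conj (base (h p))).toMonoidHom.comp (inl.comp (MonoidHom.mulSingle Q p)))

variable (f : ι → (∀ p, Q p) → T) (h : κ → (∀ p, Q p) → T)

@[simp] lemma toWreath_inl_of (i : ι) :
    toWreath f h (Coprod.inl (FreeGroup.of i)) = base (f i) := by
  simp [toWreath]

@[simp] lemma toWreath_inr_of {p : κ} (q : Q p) :
    toWreath f h (Coprod.inr (CoprodI.of q)) =
      base (h p) * inl (Pi.mulSingle p q) * (base (h p))⁻¹ := by
  simp [toWreath]

lemma rightHom_comp_toWreath : rightHom.comp (toWreath f h) = toPi ι Q := by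
  refine Coprod.hom_ext (FreeGroup.ext_hom _ _ fun i => ?_) (CoprodI.ext_hom _ _ fun p => ?_)
  · simp
  · ext q : 1
    simp

lemma left_toWreath_commutator_apply_one (k : (∀ p, Q p) → T) {p₀ p₁ : κ} (hp : p₁ ≠ p₀)
    (q : Q p₀) (r : Q p₁) :
    (toWreath f (Pi.mulSingle p₀ k) ⁅(Coprod.inr (CoprodI.of q) : Coprod (FreeGroup ι) (CoprodI Q)),
      Coprod.inr (CoprodI.of r)⁆).left 1 =
      k 1 * (k (Pi.mulSingle p₀ q)⁻¹)⁻¹ *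
        (k ((Pi.mulSingle p₀ q)⁻¹ * (Pi.mulSingle p₁ r)⁻¹) * (k (Pi.mulSingle p₁ r)⁻¹)⁻¹) := by
  rw [map_commutatorElement, toWreath_inr_of, toWreath_inr_of, Pi.mulSingle_eq_same,
    Pi.mulSingle_eq_of_ne hp, map_one, one_mul, inv_one, mul_one]
  exact left_commutator_conj_base_inl_apply_one k (Pi.mulSingle_commute hp.symm q r)

end Wreath

theorem exists_surjective_ker_toPi {α : Type*} (f : ι → (∀ p, Q p) → FreeGroup α)
    (h : κ → (∀ p, Q p) → FreeGroup α)
    (hgen : ∀ a, ∃ g ∈ (toPi ι Q).ker, (toWreath f h g).left 1 = FreeGroup.of a) :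
    ∃ ψ : (toPi ι Q).ker →* FreeGroup α, Function.Surjective ψ := by
  rw [← rightHom_comp_toWreath f h] at hgen ⊢
  refine ⟨kerEvalOne _, FreeGroup.surjective_of_forall_of_mem_range _ fun a => ?_⟩
  obtain ⟨g, hg, hga⟩ := hgen a
  exact ⟨⟨g, hg⟩, hga⟩

theorem exists_surjective_ker_toPi_of_ne {i j : ι} (hij : i ≠ j) :
    ∃ ψ : (toPi ι Q).ker →* FreeGroup (Fin 2), Function.Surjective ψ := by
  classical
  refine exists_surjective_ker_toPi (fun l _ => if l = i then .of 0 else .of 1) 1 ?_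
  simp only [Fin.forall_fin_two]
  exact ⟨⟨Coprod.inl (.of i), by simp, by simp⟩, ⟨Coprod.inl (.of j), by simp, by simp [hij.symm]⟩⟩

theorem exists_surjective_ker_toPi_of_nontrivial (i : ι) (p : κ) [Nontrivial (Q p)] :
    ∃ ψ : (toPi ι Q).ker →* FreeGroup (Fin 2), Function.Surjective ψ := by
  classical
  obtain ⟨q, hq⟩ := exists_ne (1 : Q p)
  have hne : (Pi.mulSingle p q : ∀ p, Q p)⁻¹ ≠ 1 := by simpa using hq
  -- conjugating `x_i` by `q` moves the evaluation point from `1` to `(mulSingle p q)⁻¹`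
  let f : (∀ p, Q p) → FreeGroup (Fin 2) :=
    Pi.mulSingle 1 (.of 0) * Pi.mulSingle (Pi.mulSingle p q)⁻¹ (.of 1)
  refine exists_surjective_ker_toPi (fun _ => f) 1 ?_
  simp only [Fin.forall_fin_two]
  refine ⟨⟨Coprod.inl (.of i), by simp, by simp [f, hne.symm]⟩,
    ⟨Coprod.inr (.of q) * Coprod.inl (.of i) * (Coprod.inr (.of q))⁻¹, by simp, ?_⟩⟩
  simp [f, hne]

lemma ne_mulSingle_inv_mul_mulSingle_inv {p₀ p₁ : κ} (hp : p₁ ≠ p₀) {q : Q p₀} {r : Q p₁}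
    (hq : q ≠ 1) (hr : r ≠ 1) {x : ∀ p, Q p} (hx : x p₀ = 1 ∨ ∀ p ≠ p₀, x p = 1) :
    x ≠ (Pi.mulSingle p₀ q)⁻¹ * (Pi.mulSingle p₁ r)⁻¹ := by
  rintro rfl
  rcases hx with hx | hx
  · simp [hp.symm, hq] at hx
  · simpa [hp, hr] using hx p₁ hp

theorem exists_surjective_ker_toPi_of_commutators {p₀ p₁ p₂ : κ} (hp₁ : p₁ ≠ p₀)
    (hp₂ : p₂ ≠ p₀) {q₁ q₂ : Q p₀} {r₁ : Q p₁} {r₂ : Q p₂} (hq₁ : q₁ ≠ 1) (hq₂ : q₂ ≠ 1)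
    (hr₁ : r₁ ≠ 1) (hr₂ : r₂ ≠ 1) (hne : q₁ ≠ q₂ ∨ p₁ ≠ p₂) :
    ∃ ψ : (toPi ι Q).ker →* FreeGroup (Fin 2), Function.Surjective ψ := by
  classical
  obtain ⟨d₁, hd₁⟩ : ∃ d : ∀ p, Q p, (Pi.mulSingle p₀ q₁)⁻¹ * (Pi.mulSingle p₁ r₁)⁻¹ = d :=
    ⟨_, rfl⟩
  obtain ⟨d₂, hd₂⟩ : ∃ d : ∀ p, Q p, (Pi.mulSingle p₀ q₂)⁻¹ * (Pi.mulSingle p₂ r₂)⁻¹ = d :=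
    ⟨_, rfl⟩
  have hd : d₁ ≠ d₂ := by
    rintro rfl
    have hd := hd₁.trans hd₂.symm
    rcases hne with hq | hp
    · exact hq (inv_injective (by simpa [hp₁.symm, hp₂.symm] using congr_fun hd p₀))
    · exact hr₁ (by simpa [hp₁, hp] using congr_fun hd p₁)
  -- `k` has to vanish at the points `1`, `(mulSingle p₀ q)⁻¹`, `(mulSingle p r)⁻¹`, which have at
  -- most one nontrivial coordinate, unlike `d₁` and `d₂`
  let k : (∀ p, Q p) → FreeGroup (Fin 2) := Pi.mulSingle d₁ (.of 0) * Pi.mulSingle d₂ (.of 1)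
  have hk (x : ∀ p, Q p) (hx : x p₀ = 1 ∨ ∀ p ≠ p₀, x p = 1) : k x = 1 := by
    simp only [k, Pi.mul_apply,
      Pi.mulSingle_eq_of_ne (hd₁ ▸ ne_mulSingle_inv_mul_mulSingle_inv hp₁ hq₁ hr₁ hx),
      Pi.mulSingle_eq_of_ne (hd₂ ▸ ne_mulSingle_inv_mul_mulSingle_inv hp₂ hq₂ hr₂ hx), mul_one]
  have hk_left (q : Q p₀) : k (Pi.mulSingle p₀ q)⁻¹ = 1 :=
    hk _ (.inr fun p hp => by simp [hp])
  have hk_right {p} (hp : p ≠ p₀) (r : Q p) : k (Pi.mulSingle p r)⁻¹ = 1 :=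
    hk _ (.inl (by simp [hp.symm]))
  refine exists_surjective_ker_toPi (ι := ι) 1 (Pi.mulSingle p₀ k) ?_
  simp only [Fin.forall_fin_two]
  refine ⟨⟨_, commutator_mem_ker_toPi hp₁ q₁ r₁, ?_⟩, ⟨_, commutator_mem_ker_toPi hp₂ q₂ r₂, ?_⟩⟩
  · rw [left_toWreath_commutator_apply_one _ _ hp₁, hk 1 (.inl rfl), hk_left, hk_right hp₁, hd₁]
    simp [k, Pi.mulSingle_eq_of_ne hd]
  · rw [left_toWreath_commutator_apply_one _ _ hp₂, hk 1 (.inl rfl), hk_left, hk_right hp₂, hd₂]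
    simp [k, Pi.mulSingle_eq_of_ne hd.symm]

theorem exists_surjective_ker_toPi_of_two_le_card [Fintype κ] [∀ p, Fintype (Q p)]
    [∀ p, Nontrivial (Q p)] (hκ : 2 ≤ Fintype.card κ)
    (hne : ¬(Fintype.card κ = 2 ∧ ∀ p, Fintype.card (Q p) = 2)) :
    ∃ ψ : (toPi ι Q).ker →* FreeGroup (Fin 2), Function.Surjective ψ := by
  by_cases hQ : ∃ p, 2 < Fintype.card (Q p)
  · obtain ⟨p₀, hp₀⟩ := hQ
    have : Nontrivial κ := Fintype.one_lt_card_iff_nontrivial.mp hκ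
    obtain ⟨p₁, hp₁⟩ := exists_ne p₀
    obtain ⟨q₁, q₂, hq₁, hq₂, hq⟩ := exists_pair_ne_one_of_two_lt_card hp₀
    obtain ⟨r, hr⟩ := exists_ne (1 : Q p₁)
    exact exists_surjective_ker_toPi_of_commutators hp₁ hp₁ hq₁ hq₂ hr hr (.inl hq)
  · have hκ3 : 2 < Fintype.card κ := by
      refine lt_of_le_of_ne hκ fun h => hne ⟨h.symm, fun p => ?_⟩
      have := Fintype.one_lt_card (α := Q p)
      have := not_lt.mp (not_exists.mp hQ p)
      omega
    obtain ⟨p₀, p₁, p₂, h01, h02, h12⟩ := Fintype.two_lt_card_iff.mp hκ3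
    obtain ⟨q, hq⟩ := exists_ne (1 : Q p₀)
    obtain ⟨r₁, hr₁⟩ := exists_ne (1 : Q p₁)
    obtain ⟨r₂, hr₂⟩ := exists_ne (1 : Q p₂)
    exact exists_surjective_ker_toPi_of_commutators h01.symm h02.symm hq hq hr₁ hr₂ (.inr h12)

end FreeProd

open FreeProd in
/-- Let `Q 0, …, Q (s-1)` be nontrivial finite groups, `m : ℕ`, and let
`G = FreeGroup (Fin m) ∗ (CoprodI Q)` with `φ : G →* ∀ p, Q p` the homomorphism that is
trivial on the free factor and maps each `Q p` identically onto the `p`-th coordinate.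
If `m + s ≥ 2` and it is not the case that `m = 0`, `s = 2` and `|Q 0| = |Q 1| = 2`, then
the kernel of `φ` surjects onto the free group of rank 2 (equivalently, it is a free
group of rank at least 2). -/
theorem stmt1 (m s : ℕ) (Q : Fin s → Type) [∀ p, Group (Q p)] [∀ p, Fintype (Q p)]
    [∀ p, Nontrivial (Q p)]
    (φ : Monoid.Coprod (FreeGroup (Fin m)) (Monoid.CoprodI Q) →* (∀ p, Q p))
    (hφ : φ = Monoid.Coprod.lift 1 (Monoid.CoprodI.lift fun p => MonoidHom.mulSingle Q p))
    (h2 : 2 ≤ m + s)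
    (hne : ¬(m = 0 ∧ s = 2 ∧ ∀ p, Fintype.card (Q p) = 2)) :
    ∃ ψ : φ.ker →* FreeGroup (Fin 2), Function.Surjective ψ := by
  subst hφ
  rcases (by omega : 2 ≤ m ∨ m = 1 ∨ m = 0) with hm | rfl | rfl
  · exact exists_surjective_ker_toPi_of_ne (i := ⟨0, by omega⟩) (j := ⟨1, hm⟩) (by simp)
  · exact exists_surjective_ker_toPi_of_nontrivial 0 ⟨0, by omega⟩
  · exact exists_surjective_ker_toPi_of_two_le_card (by simpa using h2) (by simpa using hne)
end

section
/- Let M be a topological space and f : M → M a homeomorphism. Then the quotient map q : M × ℝ → T(f) from M × ℝ (with the product topology) onto the mapping torus T(f) is a covering map. -/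
/-- Self-homeomorphisms of a space form a group under composition, so that `f ^ n` makes
sense for `n : ℤ`. -/
instance Homeomorph.instGroup_stmt8 {M : Type*} [TopologicalSpace M] : Group (M ≃ₜ M) where
  mul f g := g.trans f
  one := Homeomorph.refl M
  inv := Homeomorph.symm
  mul_assoc f g h := Homeomorph.ext fun _ => rfl
  one_mul f := Homeomorph.ext fun _ => rfl
  mul_one f := Homeomorph.ext fun _ => rfl
  inv_mul_cancel f := Homeomorph.ext fun x => f.symm_apply_apply x

/-- The mapping torus `T(f)` of a self-homeomorphism `f` of a topological space `M`: the
quotient of `M × ℝ` (with the product topology) by the `ℤ`-action `n • (x, t) = (fⁿ x, t - n)`,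
endowed with the quotient topology. -/
def MappingTorus {M : Type*} [TopologicalSpace M] (f : M ≃ₜ M) : Type _ :=
  Quot (fun p q : M × ℝ => ∃ n : ℤ, q = ((f ^ n) p.1, p.2 - n))

instance {M : Type*} [TopologicalSpace M] (f : M ≃ₜ M) : TopologicalSpace (MappingTorus f) :=
  inferInstanceAs (TopologicalSpace (Quot _))

/-! The orbits of the `ℤ`-action `n +ᵥ (x, t) = (fⁿ x, t - n)` on `M × ℝ` are the fibres of the
quotient map, and every slab `{(x, t) | |t - t₀| < 1/2}` is disjoint from all its nontrivial
translates, because `n` shifts the `ℝ`-coordinate by exactly `n`. A quotient map by an action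
with such neighbourhoods is a covering map (`IsAddQuotientCoveringMap.isCoveringMap`). -/

theorem Int.eq_zero_of_sub_mem_ball {t s : ℝ} {n : ℤ} (hs : s ∈ Metric.ball t (1 / 2))
    (hsn : s - n ∈ Metric.ball t (1 / 2)) : n = 0 := by
  rw [Real.ball_eq_Ioo] at hs hsn
  have : |(n : ℝ)| < 1 := abs_lt.mpr ⟨by linarith [hs.1, hsn.2], by linarith [hs.2, hsn.1]⟩
  exact Int.abs_lt_one_iff.mp (by exact_mod_cast this)

namespace MappingTorus

variable {M : Type*} [TopologicalSpace M] (f : M ≃ₜ M)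

/-- Not an instance, since it depends on `f`: statements install it with `letI`. -/
abbrev deckAction : AddAction ℤ (M × ℝ) where
  vadd n p := ((f ^ n) p.1, p.2 - n)
  zero_vadd p := Prod.ext rfl (show p.2 - ((0 : ℤ) : ℝ) = p.2 by simp)
  add_vadd m n p := Prod.ext (DFunLike.congr_fun (zpow_add f m n) p.1)
    (show p.2 - ((m + n : ℤ) : ℝ) = p.2 - n - m by push_cast; ring)

theorem rel_eq_orbitRel :
    letI := deckAction f
    (fun p q : M × ℝ => ∃ n : ℤ, q = ((f ^ n) p.1, p.2 - n)) = AddAction.orbitRel ℤ (M × ℝ) := by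
  let := deckAction f
  ext p q
  exact (exists_congr fun n => eq_comm).trans (AddAction.orbitRel ℤ (M × ℝ)).comm'

theorem mk_eq_mk_iff {p q : M × ℝ} :
    letI := deckAction f
    (Quot.mk _ p : MappingTorus f) = Quot.mk _ q ↔ p ∈ AddAction.orbit ℤ q := by
  let := deckAction f
  rw [rel_eq_orbitRel]
  exact Quotient.eq

theorem isAddQuotientCoveringMap_mk :
    letI := deckAction f
    IsAddQuotientCoveringMap (Quot.mk _ : M × ℝ → MappingTorus f) ℤ := by
  let := deckAction f
  refine
    { toIsQuotientMap := isQuotientMap_quot_mk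
      continuous_const_vadd := fun n =>
        (f ^ n).continuous.prodMap (continuous_sub_right (n : ℝ))
      apply_eq_iff_mem_orbit := mk_eq_mk_iff f
      disjoint := fun e => ⟨Prod.snd ⁻¹' Metric.ball e.2 (1 / 2),
        continuous_snd.continuousAt.preimage_mem_nhds (Metric.ball_mem_nhds _ one_half_pos),
        ?_⟩ }
  rintro n ⟨_, ⟨p, hp, rfl⟩, hnp⟩
  exact Int.eq_zero_of_sub_mem_ball hp hnp

end MappingTorus

/-- For any topological space `M` and homeomorphism `f : M ≃ₜ M`, the
quotient map `M × ℝ → T(f)` onto the mapping torus is a covering map. -/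
theorem stmt8 {M : Type*} [TopologicalSpace M] (f : M ≃ₜ M) :
    IsCoveringMap (Quot.mk _ : M × ℝ → MappingTorus f) :=
  let := MappingTorus.deckAction f
  (MappingTorus.isAddQuotientCoveringMap_mk f).isCoveringMap
end

section
/- Let Q be a finite group and φ : ℤ → Aut(Q) a group homomorphism, and let G = Q ⋊_φ ℤ be the corresponding semidirect product. Then every finite-index subgroup H of G admits a surjective group homomorphism onto ℤ, but no finite-index subgroup of G admits a surjective group homomorphism onto ℤ × ℤ. (Group-theoretic form of: the virtual first Betti number of a mapping torus of a spherical 3-manifold equals 1.) -/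
/-- An infinite cyclic group is isomorphic to `Multiplicative ℤ`. -/
lemma aux_mulEquiv_int (R : Type*) [Group R] [IsCyclic R] [Infinite R] :
    ∃ e : Multiplicative ℤ ≃* R, True := by
  obtain ⟨g, hg⟩ := IsCyclic.exists_generator (α := R)
  have hfin : ¬ IsOfFinOrder g := by
    intro h
    have : (Set.univ : Set R).Finite := by
      have h1 : (Set.univ : Set R) ⊆ (Subgroup.zpowers g : Set R) := fun x _ => hg x
      exact Set.Finite.subset h.finite_zpowers h1
    exact Set.infinite_univ this
  have hinj : Function.Injective (zpowersHom R g) := by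
    intro a b hab
    have := (injective_zpow_iff_not_isOfFinOrder.2 hfin)
    exact this hab
  have hsurj : Function.Surjective (zpowersHom R g) := by
    intro x
    obtain ⟨n, hn⟩ := hg x
    exact ⟨Multiplicative.ofAdd n, hn⟩
  exact ⟨MulEquiv.ofBijective (zpowersHom R g) ⟨hinj, hsurj⟩, trivial⟩

lemma aux_not_cyclic : ¬ IsCyclic (Multiplicative (ℤ × ℤ)) := by
  rintro ⟨g, hg⟩
  obtain ⟨n, hn⟩ := hg (Multiplicative.ofAdd ((1 : ℤ), (0 : ℤ)))
  obtain ⟨m, hm⟩ := hg (Multiplicative.ofAdd ((0 : ℤ), (1 : ℤ)))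
  set a := g.toAdd with ha
  have hn' : n • a = ((1 : ℤ), (0 : ℤ)) := by
    have := congrArg Multiplicative.toAdd hn
    simpa using this
  have hm' : m • a = ((0 : ℤ), (1 : ℤ)) := by
    have := congrArg Multiplicative.toAdd hm
    simpa using this
  have h1 : n * a.1 = 1 := congrArg Prod.fst hn'
  have h2 : n * a.2 = 0 := congrArg Prod.snd hn'
  have h3 : m * a.1 = 0 := congrArg Prod.fst hm'
  have h4 : m * a.2 = 1 := congrArg Prod.snd hm'
  have hn0 : a.1 ≠ 0 := by intro h; rw [h, mul_zero] at h1; exact one_ne_zero h1.symm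
  have hm0 : m = 0 := by
    rcases mul_eq_zero.1 h3 with h | h
    · exact h
    · exact absurd h hn0
  rw [hm0, zero_mul] at h4
  exact one_ne_zero h4.symm

/-- Let `Q` be a finite group, `φ : ℤ → Aut Q` a homomorphism and
`G = Q ⋊_φ ℤ` the corresponding semidirect product. Then every finite-index subgroup of
`G` surjects onto `ℤ`, but no finite-index subgroup of `G` surjects onto `ℤ × ℤ`.
(Group-theoretic form of: the virtual first Betti number of a mapping torus of a
spherical 3-manifold equals 1.) -/
theorem stmt13 (Q : Type*) [Group Q] [Fintype Q] (φ : Multiplicative ℤ →* MulAut Q) :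
    (∀ H : Subgroup (SemidirectProduct Q (Multiplicative ℤ) φ), H.FiniteIndex →
      ∃ ψ : H →* Multiplicative ℤ, Function.Surjective ψ) ∧
    (∀ H : Subgroup (SemidirectProduct Q (Multiplicative ℤ) φ), H.FiniteIndex →
      ¬∃ ψ : H →* Multiplicative (ℤ × ℤ), Function.Surjective ψ) := by
  set G := SemidirectProduct Q (Multiplicative ℤ) φ
  let π : G →* Multiplicative ℤ := SemidirectProduct.rightHom
  -- general fact: range of π restricted to a finite-index subgroup is infinite
  have key : ∀ H : Subgroup G, H.FiniteIndex →
      Infinite (π.comp H.subtype).range := by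
    intro H hH
    have hrange : (π.comp H.subtype).range = H.map π := by
      rw [MonoidHom.range_comp, Subgroup.range_subtype]
    have hidx : (H.map π).index ≠ 0 := by
      intro h0
      have := Subgroup.index_map_dvd (H := H) SemidirectProduct.rightHom_surjective
      rw [h0] at this
      exact hH.index_ne_zero (Nat.eq_zero_of_zero_dvd this)
    have hcard : Nat.card (H.map π) * (H.map π).index = Nat.card (Multiplicative ℤ) :=
      Subgroup.card_mul_index _
    have hMZ : Nat.card (Multiplicative ℤ) = 0 := Nat.card_eq_zero_of_infinite
    have hc0 : Nat.card (H.map π) = 0 := by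
      rw [hMZ] at hcard
      rcases Nat.mul_eq_zero.1 hcard with h | h
      · exact h
      · exact absurd h hidx
    rw [hrange]
    rcases Nat.card_eq_zero.1 hc0 with h | h
    · exact (h.false (⟨1, (H.map π).one_mem⟩ : H.map π)).elim
    · exact h
  constructor
  · intro H hH
    haveI := key H hH
    obtain ⟨e, -⟩ := aux_mulEquiv_int (π.comp H.subtype).range
    refine ⟨e.symm.toMonoidHom.comp (π.comp H.subtype).rangeRestrict, ?_⟩
    exact e.symm.surjective.comp (π.comp H.subtype).rangeRestrict_surjective
  · rintro H hH ⟨ψ, hψ⟩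
    set f := π.comp H.subtype with hf
    -- the kernel of f is finite
    haveI : Finite f.ker := by
      have : Function.Injective (fun k : f.ker => ((k : H) : G).left) := by
        rintro ⟨⟨x, hx⟩, hkx⟩ ⟨⟨y, hy⟩, hky⟩ h
        have hx1 : x.right = 1 := hkx
        have hy1 : y.right = 1 := hky
        have : x = y := by
          ext
          · exact h
          · rw [hx1, hy1]
        simpa using this
      exact Finite.of_injective _ this
    -- ψ kills the kernel of f
    have hker : ∀ k ∈ f.ker, ψ k = 1 := by
      intro k hk
      obtain ⟨n, hn, hkn⟩ :=
        isOfFinOrder_iff_pow_eq_one.1 (isOfFinOrder_of_finite (⟨k, hk⟩ : f.ker))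
      have hpow : ψ k ^ n = 1 := by
        rw [← map_pow]
        have : k ^ n = 1 := by
          have := congrArg (Subtype.val) hkn
          simpa using this
        rw [this, map_one]
      have hadd : (n : ℤ) • (ψ k).toAdd = 0 := by
        have := congrArg Multiplicative.toAdd hpow
        simpa using this
      have h1 : (n : ℤ) * (ψ k).toAdd.1 = 0 := congrArg Prod.fst hadd
      have h2 : (n : ℤ) * (ψ k).toAdd.2 = 0 := congrArg Prod.snd hadd
      have hn0 : (n : ℤ) ≠ 0 := Int.natCast_ne_zero.2 hn.ne'
      have : (ψ k).toAdd = 0 := by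
        ext
        · exact (mul_eq_zero.1 h1).resolve_left hn0
        · exact (mul_eq_zero.1 h2).resolve_left hn0
      have := congrArg Multiplicative.ofAdd this
      simpa using this
    let ψ' : H ⧸ f.ker →* Multiplicative (ℤ × ℤ) := QuotientGroup.lift f.ker ψ hker
    have hψ' : Function.Surjective ψ' := by
      intro x
      obtain ⟨h, rfl⟩ := hψ x
      exact ⟨QuotientGroup.mk h, rfl⟩
    haveI : IsCyclic (H ⧸ f.ker) :=
      isCyclic_of_surjective (QuotientGroup.quotientKerEquivRange f).symm
        (QuotientGroup.quotientKerEquivRange f).symm.surjective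
    exact aux_not_cyclic (isCyclic_of_surjective ψ' hψ')
end

section
/- Let A be an automorphism of ℤ² and θ an automorphism of the semidirect product ℤ² ⋊_A ℤ, and let G = (ℤ² ⋊_A ℤ) ⋊_θ ℤ. Then no finite-index subgroup of G admits a surjective group homomorphism onto ℤ⁵. (Group-theoretic form of: a mapping torus of a 3-manifold finitely covered by a torus bundle has virtual first Betti number at most 4.) -/
/-! The group `(ℤ² ⋊ ℤ) ⋊ ℤ` is poly-cyclic with four cyclic factors. Since a subgroup `H` of an
extension `K → G → Q` is generated by generators of `H ∩ K` together with lifts of generators of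
the image of `H` in `Q`, every subgroup of it (of finite index or not) is generated by four
elements. A surjection onto `ℤ⁵` would then generate `ℤ⁵` by four elements, contradicting the fact
that `ℤ⁵` has rank five over `ℤ`. -/

/-- For a group `G` and an automorphism `α` of `G`, `G ⋊_α ℤ` is the semidirect product of
`G` with `ℤ` with respect to the homomorphism `ℤ → Aut G` sending `1` to `α`. -/
abbrev ZSemidirect (G : Type*) [Group G] (α : G ≃* G) : Type _ :=
  SemidirectProduct G (Multiplicative ℤ) (zpowersHom (MulAut G) α)

open Finset

def SubgroupRankLE (n : ℕ) (G : Type*) [Group G] : Prop :=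
  ∀ H : Subgroup G, ∃ s : Finset G, s.card ≤ n ∧ Subgroup.closure (s : Set G) = H

theorem Subgroup.closure_union_eq_of_inf_ker {G Q : Type*} [Group G] [Group Q] {f : G →* Q}
    {H : Subgroup G} {s t : Set G} (hs : Subgroup.closure s = H ⊓ f.ker) (ht : t ⊆ H)
    (hft : Subgroup.closure (f '' t) = H.map f) : Subgroup.closure (s ∪ t) = H := by
  refine le_antisymm ((Subgroup.closure_le H).mpr (Set.union_subset ?_ ht)) fun h hh => ?_
  · exact (Subgroup.subset_closure.trans (hs.trans_le inf_le_left))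
  obtain ⟨x, hx, hfx⟩ : f h ∈ (Subgroup.closure t).map f := by
    rw [MonoidHom.map_closure, hft]; exact Subgroup.mem_map_of_mem f hh
  have hxH : x ∈ H := (Subgroup.closure_le H).mpr ht hx
  have hker : h * x⁻¹ ∈ Subgroup.closure s := by
    rw [hs]; exact ⟨H.mul_mem hh (H.inv_mem hxH), by simp [hfx]⟩
  simpa using mul_mem (Subgroup.closure_mono Set.subset_union_left hker)
    (Subgroup.closure_mono Set.subset_union_right hx)

namespace SubgroupRankLE

variable {G Q : Type*} [Group G] [Group Q] {m n : ℕ}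

theorem of_isCyclic [IsCyclic G] : SubgroupRankLE 1 G := by
  intro H
  obtain ⟨g, hg⟩ := isCyclic_iff_exists_zpowers_eq_top.mp (inferInstance : IsCyclic H)
  refine ⟨{(g : G)}, by simp, ?_⟩
  rw [coe_singleton, ← Subgroup.zpowers_eq_closure, ← H.coe_subtype, ← MonoidHom.map_zpowers, hg,
    ← MonoidHom.range_eq_map, Subgroup.range_subtype]

theorem exists_closure_eq_of_le {N : Subgroup G} (hN : SubgroupRankLE n N) {K : Subgroup G}
    (hK : K ≤ N) : ∃ s : Finset G, s.card ≤ n ∧ Subgroup.closure (s : Set G) = K := by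
  classical
  obtain ⟨s, hs, hcl⟩ := hN (K.subgroupOf N)
  refine ⟨s.image N.subtype, card_image_le.trans hs, ?_⟩
  rw [coe_image, ← MonoidHom.map_closure, hcl, Subgroup.map_subgroupOf_eq_of_le hK]

theorem of_mulEquiv (e : G ≃* Q) (h : SubgroupRankLE n G) : SubgroupRankLE n Q := by
  classical
  intro K
  obtain ⟨s, hs, hcl⟩ := h (K.comap e)
  refine ⟨s.image e, card_image_le.trans hs, ?_⟩
  rw [coe_image, ← MulEquiv.coe_toMonoidHom, ← MonoidHom.map_closure, hcl]
  exact Subgroup.map_comap_eq_self_of_surjective e.surjective K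

theorem of_ker (f : G →* Q) (hker : SubgroupRankLE m f.ker) (hQ : SubgroupRankLE n Q) :
    SubgroupRankLE (m + n) G := by
  classical
  intro H
  obtain ⟨s, hs, hscl⟩ := hker.exists_closure_eq_of_le (inf_le_right : H ⊓ f.ker ≤ f.ker)
  obtain ⟨t, ht, htcl⟩ := hQ (H.map f)
  have hsurj : Set.SurjOn f H t := fun q hq =>
    Subgroup.mem_map.mp (htcl ▸ Subgroup.subset_closure hq : q ∈ H.map f)
  obtain ⟨u, huH, hinj, hut⟩ := exists_subset_injOn_image_eq_of_surjOn _ t hsurj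
  refine ⟨s ∪ u, (card_union_le _ _).trans (add_le_add hs ?_), ?_⟩
  · rwa [← card_image_of_injOn hinj, hut]
  · rw [coe_union]
    exact Subgroup.closure_union_eq_of_inf_ker hscl huH (by rw [← coe_image, hut, htcl])

theorem semidirectProduct {N : Type*} [Group N] {φ : Q →* MulAut N} (hN : SubgroupRankLE m N)
    (hQ : SubgroupRankLE n Q) : SubgroupRankLE (m + n) (N ⋊[φ] Q) :=
  of_ker SemidirectProduct.rightHom (by
    rw [← SemidirectProduct.range_inl_eq_ker_rightHom]
    exact hN.of_mulEquiv (MonoidHom.ofInjective SemidirectProduct.inl_injective)) hQ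

theorem int_prod_int : SubgroupRankLE 2 (Multiplicative (ℤ × ℤ)) :=
  (of_isCyclic.semidirectProduct (φ := 1) of_isCyclic).of_mulEquiv
    (SemidirectProduct.mulEquivProd.trans (MulEquiv.prodMultiplicative ℤ ℤ).symm)

end SubgroupRankLE

theorem le_rank_multiplicative_fin_int (n : ℕ) : n ≤ Group.rank (Multiplicative (Fin n → ℤ)) := by
  obtain ⟨s, hcard, hs⟩ := Group.rank_spec (Multiplicative (Fin n → ℤ))
  set t := s.map Multiplicative.toAdd.toEmbedding
  have hspan : Submodule.span ℤ (t : Set (Fin n → ℤ)) = ⊤ := by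
    apply Submodule.toAddSubgroup_injective
    rw [Submodule.span_int_eq_addSubgroupClosure, Submodule.top_toAddSubgroup, coe_map,
      Equiv.coe_toEmbedding, Equiv.image_eq_preimage_symm, Multiplicative.toAdd_symm_eq,
      ← Subgroup.toAddSubgroup'_closure, hs, map_top]
  have := finrank_span_finset_le_card (R := ℤ) t
  rwa [Set.finrank, hspan, finrank_top, Module.finrank_fin_fun, card_map, hcard] at this

/-- Let `A` be an automorphism of `ℤ²`, `θ` an automorphism of
`ℤ² ⋊_A ℤ`, and `G = (ℤ² ⋊_A ℤ) ⋊_θ ℤ`. Then no finite-index subgroup of `G` admits a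
surjective homomorphism onto `ℤ⁵`. (Group-theoretic form of: a mapping torus of a
3-manifold finitely covered by a torus bundle has virtual first Betti number at most 4.) -/
theorem stmt14 (A : Multiplicative (ℤ × ℤ) ≃* Multiplicative (ℤ × ℤ))
    (θ : ZSemidirect (Multiplicative (ℤ × ℤ)) A ≃* ZSemidirect (Multiplicative (ℤ × ℤ)) A) :
    ∀ H : Subgroup (ZSemidirect (ZSemidirect (Multiplicative (ℤ × ℤ)) A) θ),
      H.FiniteIndex →
      ∀ ψ : H →* Multiplicative (Fin 5 → ℤ), ¬Function.Surjective ψ := by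
  intro H _ ψ hψ
  have hG : SubgroupRankLE 4 (ZSemidirect (ZSemidirect (Multiplicative (ℤ × ℤ)) A) θ) :=
    (SubgroupRankLE.int_prod_int.semidirectProduct .of_isCyclic).semidirectProduct .of_isCyclic
  obtain ⟨s, hs, rfl⟩ := hG H
  have : 5 ≤ 4 :=
    calc 5 ≤ Group.rank (Multiplicative (Fin 5 → ℤ)) := le_rank_multiplicative_fin_int 5
      _ ≤ s.card :=
        (Group.rank_le_of_surjective ψ hψ).trans (Subgroup.rank_closure_finset_le_card s)
      _ ≤ 4 := hs
  omega
end
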